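/- arXiv:2311.16355 — 2 statements merged into one kernel-verified Lean document; each statement's English description precedes it below -/
import Mathlib

section
/- In a topos satisfying the Nullstellensatz (every object is either initial or has a global element), if an object X has exactly two complemented subobjects (namely 0 and X itself, i.e., X is connected), then the unique map X → 1 is an epimorphism. -/
open CategoryTheory CategoryTheory.Limits

universe v u

variable (C : Type u) [Category.{v} C]

section Preamble

variable [HasFiniteLimits C] [HasFiniteColimits C] [HasImages C] [InitialMonoClass C]

instance monoFromTerminal {X : C} (a : ⊤_ C ⟶ X) : Mono a :=
  ⟨fun g h _ => terminal.hom_ext g h⟩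

/-- NS: every object is either initial or admits a global element. -/
def SatisfiesNS : Prop := ∀ X : C, Nonempty (IsInitial X) ∨ Nonempty (⊤_ C ⟶ X)

/-- A subobject is complemented if it has a complement in the subobject lattice. -/
def IsComplementedSub {X : C} (A : Subobject X) : Prop :=
  ∃ B : Subobject X, A ⊓ B = ⊥ ∧ A ⊔ B = ⊤

/-- An object is connected if it has exactly two complemented subobjects: ⊥ and ⊤, distinct. -/
def IsConnectedObj (X : C) : Prop :=
  (⊥ : Subobject X) ≠ ⊤ ∧ ∀ A : Subobject X, IsComplementedSub C A → A = ⊥ ∨ A = ⊤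

/-- The object 2 = 1 + 1. -/
noncomputable def decTwo : C := (⊤_ C) ⨿ (⊤_ C)

/-- An object is decidable if its diagonal is a complemented subobject. -/
def IsDecidableObj (Y : C) : Prop := IsComplementedSub C (Subobject.mk (diag Y))

/-- The fiber of `f` over a global element `b`, as an object. -/
noncomputable def fib {X Y : C} (f : X ⟶ Y) (b : ⊤_ C ⟶ Y) : C := pullback f b

/-- The fiber of `f` over a global element `b`, as a subobject of the domain. -/
noncomputable def fibSub {X Y : C} (f : X ⟶ Y) (b : ⊤_ C ⟶ Y) : Subobject X :=
  (Subobject.pullback f).obj (Subobject.mk b)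

end Preamble

section

variable {C}

theorem epi_terminal_from_of_global_element [HasTerminal C] {X : C} (a : ⊤_ C ⟶ X) :
    Epi (terminal.from X) :=
  SplitEpi.epi ⟨a, terminal.hom_ext _ _⟩

theorem IsConnectedObj.not_isInitial [HasFiniteLimits C] [HasFiniteColimits C] [HasImages C]
    [InitialMonoClass C] {X : C} (hX : IsConnectedObj C X) : IsEmpty (IsInitial X) :=
  ⟨fun hI => hX.1 ((Subobject.subsingleton_of_isInitial hI).elim _ _)⟩

end

variable [HasFiniteLimits C] [HasFiniteColimits C] [HasImages C] [InitialMonoClass C]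

theorem stmt0 (hNS : SatisfiesNS C) (X : C) (hX : IsConnectedObj C X) :
    Epi (terminal.from X) := by
  obtain ⟨⟨hI⟩⟩ | ⟨⟨a⟩⟩ := hNS X
  · exact (hX.not_isInitial.false hI).elim
  · exact epi_terminal_from_of_global_element a
end

section
/- In a topos satisfying NS, two global elements of any object are either equal or disjoint: for any b₁, b₂ : 1 → B, either b₁ = b₂ or the pullback (intersection) of the subobjects determined by b₁ and b₂ is initial. -/
open CategoryTheory CategoryTheory.Limits

universe v u

variable (C : Type u) [Category.{v} C]

section

variable {C}

namespace CategoryTheory.Subobject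

theorem mk_inf_mk [HasPullbacks C] {A₁ A₂ X : C} (f : A₁ ⟶ X) (g : A₂ ⟶ X)
    [Mono f] [Mono g] :
    mk f ⊓ mk g = mk (pullback.fst f g ≫ f) := by
  refine le_antisymm ?_ (_root_.le_inf (mk_le_mk_of_comm _ rfl)
    (mk_le_mk_of_comm _ pullback.condition.symm))
  refine le_mk_of_comm
    (pullback.lift (ofLEMk _ f _root_.inf_le_left) (ofLEMk _ g _root_.inf_le_right)
      (by simp only [ofLEMk_comp])) ?_
  simp only [pullback.lift_fst_assoc, ofLEMk_comp]

theorem mk_eq_bot_of_isInitial [HasInitial C] [InitialMonoClass C] {A X : C} (f : A ⟶ X)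
    [Mono f] (hA : IsInitial A) : mk f = ⊥ :=
  le_antisymm (mk_le_of_comm (hA.to _) (hA.hom_ext _ _)) bot_le

end CategoryTheory.Subobject

theorem CategoryTheory.Limits.IsTerminal.eq_of_hom_to_pullback {T X : C} (hT : IsTerminal T)
    {f g : T ⟶ X} [HasPullback f g] (t : T ⟶ pullback f g) : f = g := by
  have hfst : t ≫ pullback.fst f g = 𝟙 T := hT.hom_ext _ _
  have hsnd : t ≫ pullback.snd f g = 𝟙 T := hT.hom_ext _ _
  calc f = (t ≫ pullback.fst f g) ≫ f := by rw [hfst, Category.id_comp]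
    _ = (t ≫ pullback.snd f g) ≫ g := by simp only [Category.assoc, pullback.condition]
    _ = g := by rw [hsnd, Category.id_comp]

end

variable [HasFiniteLimits C] [HasFiniteColimits C] [HasImages C] [InitialMonoClass C]

theorem stmt7 (hNS : SatisfiesNS C) (B : C) (b₁ b₂ : ⊤_ C ⟶ B) :
    b₁ = b₂ ∨ Subobject.mk b₁ ⊓ Subobject.mk b₂ = ⊥ := by
  rcases hNS (pullback b₁ b₂) with ⟨⟨hInitial⟩⟩ | ⟨⟨t⟩⟩
  · right
    rw [Subobject.mk_inf_mk]
    exact Subobject.mk_eq_bot_of_isInitial _ hInitial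
  · left
    exact terminalIsTerminal.eq_of_hom_to_pullback t
end
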